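/- arXiv:2410.05593 — 4 statements merged into one kernel-verified Lean document; each statement's English description precedes it below -/
import Mathlib

section
/- Let n, m, r be positive natural numbers. Let M ∈ ℂ^{n×r} with M* M = I_r, V ∈ ℂ^{m×r} with V* V = I_r, and Σ ∈ ℂ^{r×r} invertible, and set X = M Σ V* (a thin singular value decomposition of the n×m matrix X). Let Y ∈ ℂ^{n×m}, and define the DMD operator F = Y V Σ⁻¹ M* (an n×n matrix). Then for every n×n complex matrix K, ‖Y − F X‖_F ≤ ‖Y − K X‖_F, where ‖·‖_F is the Frobenius norm. That is, the DMD operator F = Y X† solves the least-squares problem argmin_K ‖Y − K X‖_F. -/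
open scoped Matrix

noncomputable def frobNorm {n m : ℕ} (B : Matrix (Fin n) (Fin m) ℂ) : ℝ :=
  Real.sqrt (∑ i, ∑ j, ‖B i j‖ ^ 2)

/-!
Writing `X = M Σ V*`, one has `X† X = V V*` with `X† = V Σ⁻¹ M*`, so `F X = Y V V*` is the
orthogonal projection of the rows of `Y` onto the row space of `X`. For any `K`,
`Y - K X = (Y - F X) + (F - K) X`, and the residual `Y - F X` annihilates `V`, hence is
Frobenius-orthogonal to `(F - K) X = ((F - K) M Σ) V*`. Pythagoras gives
`‖Y - K X‖_F² = ‖Y - F X‖_F² + ‖(F - K) X‖_F²`.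
-/

namespace Matrix

variable {l m n α : Type*}

theorem residual_mul_conjTranspose_eq_zero [Fintype m] [Fintype n] [DecidableEq n] [Ring α]
    [StarRing α] {V : Matrix m n α} (hV : Vᴴ * V = 1) (Y : Matrix l m α) (Z : Matrix l n α) :
    (Y - Y * (V * Vᴴ)) * (Z * Vᴴ)ᴴ = 0 := by
  rw [conjTranspose_mul, conjTranspose_conjTranspose, ← Matrix.mul_assoc, Matrix.sub_mul,
    Matrix.mul_assoc Y, Matrix.mul_assoc V, hV, Matrix.mul_one, sub_self, Matrix.zero_mul]

theorem svd_pseudoinverse_mul_self [Fintype l] [Fintype n] [DecidableEq n] [CommRing α]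
    [StarRing α] {M : Matrix l n α} (hM : Mᴴ * M = 1) {S : Matrix n n α} (hS : IsUnit S)
    (V : Matrix m n α) :
    V * S⁻¹ * Mᴴ * (M * S * Vᴴ) = V * Vᴴ := by
  have hSinv : S⁻¹ * S = 1 := nonsing_inv_mul S ((isUnit_iff_isUnit_det S).mp hS)
  calc V * S⁻¹ * Mᴴ * (M * S * Vᴴ) = V * (S⁻¹ * ((Mᴴ * M) * S)) * Vᴴ := by
        simp only [Matrix.mul_assoc]
    _ = V * Vᴴ := by rw [hM, Matrix.one_mul, hSinv, Matrix.mul_one]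

end Matrix

open Matrix

theorem frobNorm_sq {n m : ℕ} (B : Matrix (Fin n) (Fin m) ℂ) :
    frobNorm B ^ 2 = (B * Bᴴ).trace.re := by
  rw [frobNorm, Real.sq_sqrt (by positivity), trace, Complex.re_sum]
  refine Finset.sum_congr rfl fun i _ => ?_
  simp only [diag_apply, mul_apply, conjTranspose_apply, Complex.re_sum, Complex.star_def,
    Complex.mul_conj, Complex.sq_norm, Complex.ofReal_re]

theorem frobNorm_add_sq_of_mul_conjTranspose_eq_zero {n m : ℕ}
    {C D : Matrix (Fin n) (Fin m) ℂ} (h : C * Dᴴ = 0) :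
    frobNorm (C + D) ^ 2 = frobNorm C ^ 2 + frobNorm D ^ 2 := by
  have h' : D * Cᴴ = 0 := by rw [← conjTranspose_conjTranspose D, ← conjTranspose_mul, h,
    conjTranspose_zero]
  simp only [frobNorm_sq, conjTranspose_add, Matrix.mul_add, Matrix.add_mul, h, h', add_zero,
    zero_add, trace_add, Complex.add_re]

theorem frobNorm_le_frobNorm_add_of_mul_conjTranspose_eq_zero {n m : ℕ}
    {C D : Matrix (Fin n) (Fin m) ℂ} (h : C * Dᴴ = 0) :
    frobNorm C ≤ frobNorm (C + D) := by
  refine le_of_sq_le_sq ?_ (Real.sqrt_nonneg _)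
  rw [frobNorm_add_sq_of_mul_conjTranspose_eq_zero h]
  nlinarith [sq_nonneg (frobNorm D)]

theorem dmd_least_squares_general {n m r : ℕ}
    (M : Matrix (Fin n) (Fin r) ℂ) (hM : Mᴴ * M = 1)
    (V : Matrix (Fin m) (Fin r) ℂ) (hV : Vᴴ * V = 1)
    (S : Matrix (Fin r) (Fin r) ℂ) (hS : IsUnit S)
    (X : Matrix (Fin n) (Fin m) ℂ) (hX : X = M * S * Vᴴ)
    (Y : Matrix (Fin n) (Fin m) ℂ)
    (F : Matrix (Fin n) (Fin n) ℂ) (hF : F = Y * V * S⁻¹ * Mᴴ) :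
    ∀ K : Matrix (Fin n) (Fin n) ℂ,
      frobNorm (Y - F * X) ≤ frobNorm (Y - K * X) := by
  intro K
  have hFX : F * X = Y * (V * Vᴴ) := by
    rw [hF, hX, ← svd_pseudoinverse_mul_self hM hS V]
    simp only [Matrix.mul_assoc]
  have hsplit : Y - K * X = (Y - F * X) + (F - K) * M * S * Vᴴ := by
    rw [hX]
    simp only [Matrix.sub_mul, Matrix.mul_assoc]
    abel
  rw [hsplit]
  apply frobNorm_le_frobNorm_add_of_mul_conjTranspose_eq_zero
  rw [hFX]
  exact residual_mul_conjTranspose_eq_zero hV Y _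

/-- Given a thin SVD `X = M Σ V*`, the DMD operator `F = Y V Σ⁻¹ M* = Y X†`
minimizes `‖Y - K X‖_F` over all `n × n` matrices `K`. -/
theorem dmd_least_squares {n m r : ℕ} (hn : 0 < n) (hm : 0 < m) (hr : 0 < r)
    (M : Matrix (Fin n) (Fin r) ℂ) (hM : Mᴴ * M = 1)
    (V : Matrix (Fin m) (Fin r) ℂ) (hV : Vᴴ * V = 1)
    (S : Matrix (Fin r) (Fin r) ℂ) (hS : IsUnit S)
    (X : Matrix (Fin n) (Fin m) ℂ) (hX : X = M * S * Vᴴ)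
    (Y : Matrix (Fin n) (Fin m) ℂ)
    (F : Matrix (Fin n) (Fin n) ℂ) (hF : F = Y * V * S⁻¹ * Mᴴ) :
    ∀ K : Matrix (Fin n) (Fin n) ℂ,
      frobNorm (Y - F * X) ≤ frobNorm (Y - K * X) :=
  dmd_least_squares_general M hM V hV S hS X hX Y F hF
end

section
/- Let n, m, r be positive natural numbers. Let M ∈ ℂ^{n×r} with M* M = I_r, V ∈ ℂ^{m×r} with V* V = I_r, and Σ ∈ ℂ^{r×r} invertible, and set X = M Σ V* (a thin singular value decomposition of the n×m matrix X). Let Y ∈ ℂ^{n×m}, and define the DMD operator F = Y V Σ⁻¹ M* (an n×n matrix) and the projected DMD operator K = M* Y V Σ⁻¹ (an r×r matrix). Suppose λ ∈ ℂ with λ ≠ 0 and w ∈ ℂ^r satisfy K w = λ w. Then the exact DMD mode ψ := λ⁻¹ • (Y V Σ⁻¹ w) satisfies F ψ = λ ψ; in particular, if ψ ≠ 0 then every nonzero eigenvalue of K is an eigenvalue of F. -/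
open scoped Matrix

/-- Exact DMD modes: if `(λ, w)` is an eigenpair of the projected DMD operator
`K = M* Y V Σ⁻¹` with `λ ≠ 0`, then `ψ = λ⁻¹ • (Y V Σ⁻¹ w)` satisfies `F ψ = λ ψ`,
where `F = Y V Σ⁻¹ M*`; in particular, if `ψ ≠ 0` then `λ` is an eigenvalue of `F`. -/
theorem dmd_exact_modes {n m r : ℕ} (hn : 0 < n) (hm : 0 < m) (hr : 0 < r)
    (M : Matrix (Fin n) (Fin r) ℂ) (hM : Mᴴ * M = 1)
    (V : Matrix (Fin m) (Fin r) ℂ) (hV : Vᴴ * V = 1)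
    (S : Matrix (Fin r) (Fin r) ℂ) (hS : IsUnit S)
    (X : Matrix (Fin n) (Fin m) ℂ) (hX : X = M * S * Vᴴ)
    (Y : Matrix (Fin n) (Fin m) ℂ)
    (F : Matrix (Fin n) (Fin n) ℂ) (hF : F = Y * V * S⁻¹ * Mᴴ)
    (K : Matrix (Fin r) (Fin r) ℂ) (hK : K = Mᴴ * Y * V * S⁻¹)
    (lam : ℂ) (hlam : lam ≠ 0) (w : Fin r → ℂ) (hw : K.mulVec w = lam • w)
    (ψ : Fin n → ℂ) (hψ : ψ = lam⁻¹ • (Y * V * S⁻¹).mulVec w) :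
    F.mulVec ψ = lam • ψ ∧
    (ψ ≠ 0 → Module.End.HasEigenvalue (Matrix.toLin' F) lam) := by
  set A : Matrix (Fin n) (Fin r) ℂ := Y * V * S⁻¹ with hA
  have key : F.mulVec ψ = lam • ψ := by
    have h1 : F.mulVec ψ = lam⁻¹ • A.mulVec (K.mulVec w) := by
      rw [hψ, Matrix.mulVec_smul, Matrix.mulVec_mulVec, Matrix.mulVec_mulVec]
      congr 1
      rw [hF, hK]
      simp only [hA, Matrix.mul_assoc]
    rw [h1, hw, Matrix.mulVec_smul, hψ, smul_smul, smul_smul,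
      inv_mul_cancel₀ hlam, mul_inv_cancel₀ hlam]
  refine ⟨key, fun hne => ?_⟩
  exact Module.End.hasEigenvalue_of_hasEigenvector
    ⟨by simpa [Module.End.mem_eigenspace_iff, Matrix.toLin'_apply] using key, hne⟩
end

section
/- Let n, m, r be positive natural numbers. Let M ∈ ℂ^{n×r} with M* M = I_r, V ∈ ℂ^{m×r} with V* V = I_r, and Σ ∈ ℂ^{r×r} invertible, and set X = M Σ V* (a thin singular value decomposition of the n×m matrix X). Let Y ∈ ℂ^{n×m}, and define the DMD operator F = Y V Σ⁻¹ M* (an n×n matrix) and the projected DMD operator K = M* Y V Σ⁻¹ (an r×r matrix). Suppose moreover that the columns of Y lie in the column space of M, i.e., Y = M C for some C ∈ ℂ^{r×m}. Then: (i) whenever K w = λ w for w ∈ ℂ^r and λ ∈ ℂ, the projected DMD mode M w satisfies F (M w) = λ (M w); (ii) if w ≠ 0 then M w ≠ 0, so every eigenvalue of K is an eigenvalue of F with eigenvector M w; and (iii) if additionally λ ≠ 0, the exact DMD mode λ⁻¹ • (Y V Σ⁻¹ w) equals the projected DMD mode M w. -/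
open scoped Matrix

/-- When the columns of `Y` lie in the column space of `M` (i.e. `Y = M C`),
eigenpairs `(λ, w)` of the projected DMD operator `K = M* Y V Σ⁻¹` give
eigenpairs `(λ, M w)` of `F = Y V Σ⁻¹ M*`, the projected mode `M w` is nonzero
whenever `w` is, and for `λ ≠ 0` the exact DMD mode `λ⁻¹ • (Y V Σ⁻¹ w)`
coincides with the projected DMD mode `M w`. -/
theorem dmd_projected_modes {n m r : ℕ} (hn : 0 < n) (hm : 0 < m) (hr : 0 < r)
    (M : Matrix (Fin n) (Fin r) ℂ) (hM : Mᴴ * M = 1)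
    (V : Matrix (Fin m) (Fin r) ℂ) (hV : Vᴴ * V = 1)
    (S : Matrix (Fin r) (Fin r) ℂ) (hS : IsUnit S)
    (X : Matrix (Fin n) (Fin m) ℂ) (hX : X = M * S * Vᴴ)
    (Y : Matrix (Fin n) (Fin m) ℂ)
    (C : Matrix (Fin r) (Fin m) ℂ) (hY : Y = M * C)
    (F : Matrix (Fin n) (Fin n) ℂ) (hF : F = Y * V * S⁻¹ * Mᴴ)
    (K : Matrix (Fin r) (Fin r) ℂ) (hK : K = Mᴴ * Y * V * S⁻¹)
    (lam : ℂ) (w : Fin r → ℂ) (hw : K.mulVec w = lam • w) :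
    F.mulVec (M.mulVec w) = lam • M.mulVec w ∧
    (w ≠ 0 → M.mulVec w ≠ 0 ∧
      Module.End.HasEigenvector (Matrix.toLin' F) lam (M.mulVec w)) ∧
    (lam ≠ 0 → lam⁻¹ • (Y * V * S⁻¹).mulVec w = M.mulVec w) := by
  -- Y V S⁻¹ = M K
  have hYVS : Y * V * S⁻¹ = M * K := by
    rw [hK, hY]
    rw [show Mᴴ * (M * C) * V * S⁻¹ = Mᴴ * M * (C * V * S⁻¹) by
        simp [Matrix.mul_assoc], hM, one_mul]
    simp [Matrix.mul_assoc]
  have hFM : F * M = Y * V * S⁻¹ := by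
    rw [hF, Matrix.mul_assoc _ Mᴴ M, hM, Matrix.mul_one]
  have key : (Y * V * S⁻¹).mulVec w = lam • M.mulVec w := by
    rw [hYVS, ← Matrix.mulVec_mulVec, hw, Matrix.mulVec_smul]
  have h1 : F.mulVec (M.mulVec w) = lam • M.mulVec w := by
    rw [Matrix.mulVec_mulVec, hFM, key]
  refine ⟨h1, fun hw0 => ?_, fun hlam => ?_⟩
  · have hMw : M.mulVec w ≠ 0 := by
      intro h
      apply hw0
      have := congrArg (Mᴴ.mulVec) h
      rwa [Matrix.mulVec_mulVec, hM, Matrix.one_mulVec, Matrix.mulVec_zero] at this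
    refine ⟨hMw, ?_, hMw⟩
    rw [Module.End.mem_eigenspace_iff]
    simpa [Matrix.toLin'_apply] using h1
  · rw [key, smul_smul, inv_mul_cancel₀ hlam, one_smul]
end

section
/- Let n, m, r be positive natural numbers. Let M ∈ ℂ^{n×r} with M* M = I_r, V ∈ ℂ^{m×r} with V* V = I_r, and Σ ∈ ℂ^{r×r} invertible, and set X = M Σ V* (a thin singular value decomposition of the n×m matrix X). Let Y ∈ ℂ^{n×m}, and define the DMD operator F = Y V Σ⁻¹ M* (an n×n matrix) and the projected DMD operator K = M* Y V Σ⁻¹ (an r×r matrix). If w ∈ ℂ^r and λ ∈ ℂ satisfy F (M w) = λ • (M w), then K w = λ w. That is, every eigenvalue of F whose eigenvector lies in the column space of M is also an eigenvalue of the projected operator K. -/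
open scoped Matrix

/-- Every eigenvalue of the DMD operator `F = Y V Σ⁻¹ M*` whose eigenvector lies in
the column space of `M` is also an eigenvalue of the projected operator
`K = M* Y V Σ⁻¹`: if `F (M w) = λ (M w)` then `K w = λ w`. -/
theorem dmd_projected_eigen_of_exact {n m r : ℕ} (hn : 0 < n) (hm : 0 < m) (hr : 0 < r)
    (M : Matrix (Fin n) (Fin r) ℂ) (hM : Mᴴ * M = 1)
    (V : Matrix (Fin m) (Fin r) ℂ) (hV : Vᴴ * V = 1)
    (S : Matrix (Fin r) (Fin r) ℂ) (hS : IsUnit S)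
    (X : Matrix (Fin n) (Fin m) ℂ) (hX : X = M * S * Vᴴ)
    (Y : Matrix (Fin n) (Fin m) ℂ)
    (F : Matrix (Fin n) (Fin n) ℂ) (hF : F = Y * V * S⁻¹ * Mᴴ)
    (K : Matrix (Fin r) (Fin r) ℂ) (hK : K = Mᴴ * Y * V * S⁻¹)
    (w : Fin r → ℂ) (lam : ℂ)
    (hw : F.mulVec (M.mulVec w) = lam • M.mulVec w) :
    K.mulVec w = lam • w := by
  have h1 : Mᴴ.mulVec (F.mulVec (M.mulVec w)) = Mᴴ.mulVec (lam • M.mulVec w) := by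
    rw [hw]
  have h2 : (Mᴴ * F * M).mulVec w = lam • (Mᴴ * M).mulVec w := by
    simpa [Matrix.mulVec_mulVec, Matrix.mulVec_smul, Matrix.mul_assoc] using h1
  have h3 : Mᴴ * F * M = K := by
    rw [hF, hK]
    calc Mᴴ * (Y * V * S⁻¹ * Mᴴ) * M
        = Mᴴ * Y * V * S⁻¹ * (Mᴴ * M) := by simp only [Matrix.mul_assoc]
      _ = Mᴴ * Y * V * S⁻¹ := by rw [hM, Matrix.mul_one]
  rw [h3, hM] at h2
  simpa using h2
end
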